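/- Let G be a graph, k an integer, and q : [k] → ℕ, q' : ℕ → ℕ non-decreasing. Suppose G has a connectivity-sensitive star decomposition (T, χ) with central bag b such that χ(b) is q-unbreakable in G and, for every leaf ℓ of T, the set χ(ℓ) is q'-unbreakability-tied to σ(ℓ) := χ(ℓ) ∩ χ(b). Then the whole vertex set V(G) is q*-unbreakable, where q*(i) = q(i) + (2^{q(i)} + i) · q'(q(i) + i) for i ∈ [k]. -/

import Mathlib

open Finset

variable {V : Type*} [Fintype V] [DecidableEq V]

/-- A separation of a graph: a pair of vertex sets covering all vertices with no edge
between the two strict sides. Its order is `(A ∩ B).card`. -/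
def IsSep (G : SimpleGraph V) (A B : Finset V) : Prop :=
  A ∪ B = Finset.univ ∧
    ∀ a ∈ A, a ∉ B → ∀ b ∈ B, b ∉ A → ¬ G.Adj a b

/-- The `k`-improved graph `G^⟨k⟩`: `x` and `y` are adjacent iff they are distinct and no
separation of `G` of order at most `k` separates them (i.e. `μ_G(x,y) > k`). -/
def ImprovedGraph (G : SimpleGraph V) (k : ℕ) : SimpleGraph V where
  Adj x y := x ≠ y ∧ ∀ A B : Finset V, IsSep G A B → (A ∩ B).card ≤ k →
    ¬ ((x ∈ A ∧ x ∉ B ∧ y ∈ B ∧ y ∉ A) ∨ (y ∈ A ∧ y ∉ B ∧ x ∈ B ∧ x ∉ A))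
  symm := ⟨by
    rintro x y ⟨hxy, h⟩
    exact ⟨hxy.symm, fun A B hs ho hc => h A B hs ho hc.symm⟩⟩
  loopless := ⟨fun x h => h.1 rfl⟩

/-- `S` is `(q,k)`-unbreakable in `G`: every separation of order at most `k` has at most `q`
vertices of `S` on one of its sides. -/
def UnbreakableSet (G : SimpleGraph V) (S : Finset V) (q k : ℕ) : Prop :=
  ∀ A B : Finset V, IsSep G A B → (A ∩ B).card ≤ k →
    (A ∩ S).card ≤ q ∨ (B ∩ S).card ≤ q

/-- A clique separation: both strict sides nonempty and the separator is a clique. -/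
def IsCliqueSep (G : SimpleGraph V) (A B : Finset V) : Prop :=
  IsSep G A B ∧ (A \ B).Nonempty ∧ (B \ A).Nonempty ∧ G.IsClique (↑(A ∩ B) : Set V)

/-- `y` is reachable from `x` in `G − W`. -/
def AvoidReach (G : SimpleGraph V) (W : Finset V) (x y : V) : Prop :=
  ∃ p : G.Walk x y, ∀ v ∈ p.support, v ∉ W

/-- `W` is an `X`-`Y` separator: no vertex of `Y \ W` is reachable from `X \ W` in `G − W`. -/
def IsSepSet (G : SimpleGraph V) (W X Y : Finset V) : Prop :=
  ∀ x ∈ X, ∀ y ∈ Y, ¬ AvoidReach G W x y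

/-- `R_{G−W}(X \ W)`: the set of vertices reachable from `X \ W` in `G − W`. -/
def ReachSet (G : SimpleGraph V) (W X : Finset V) : Set V :=
  {y | ∃ x ∈ X, AvoidReach G W x y}

/-- An important `X`-`Y` separator. -/
def IsImpSep (G : SimpleGraph V) (X Y W : Finset V) : Prop :=
  IsSepSet G W X Y ∧
  (∀ W' ⊆ W, W' ≠ W → ¬ IsSepSet G W' X Y) ∧
  ∀ W' : Finset V, IsSepSet G W' X Y → W'.card ≤ W.card →
    ¬ (ReachSet G W X ⊂ ReachSet G W' X)

/-- A `k`-important `X`-`Y` separator. -/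
def IsKImpSep (G : SimpleGraph V) (k : ℕ) (X Y W : Finset V) : Prop :=
  IsImpSep G X Y W ∧ W.card ≤ k ∧
  ∀ W' : Finset V, IsImpSep G X Y W' → W'.card ≤ k → W' ≠ W →
    ¬ (ReachSet G W X ⊆ ReachSet G W' X)

/-- The `k`-important separator extension of `D`. -/
def KImpExt (G : SimpleGraph V) (D : Finset V) (k : ℕ) : Set V :=
  {u | (∃ v, v ≠ u ∧ ∃ S : Finset V, IsKImpSep G k {v} D S ∧ u ∈ S) ∨
       (({u} : Finset V).card ≤ k ∧ IsSepSet G {u} {u} D ∧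
        ∀ S : Finset V, IsSepSet G S {u} D → S.card ≤ k → S = {u})}

/-- `C` is (the vertex set of) a connected component of `G − A`. -/
def IsCompAvoiding (G : SimpleGraph V) (A : Set V) (C : Set V) : Prop :=
  ∃ x, x ∉ A ∧ C = {y | ∃ p : G.Walk x y, ∀ v ∈ p.support, v ∉ A}

/-- `C` is (the vertex set of) a connected component of the induced subgraph `G[S]`. -/
def IsCompWithin (G : SimpleGraph V) (S : Set V) (C : Set V) : Prop :=
  ∃ x ∈ S, C = {y | ∃ p : G.Walk x y, ∀ v ∈ p.support, v ∈ S}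

/-- The (open) neighborhood of a vertex set `C` in `G`. -/
def nbhdSet (G : SimpleGraph V) (C : Set V) : Set V :=
  {v | v ∉ C ∧ ∃ c ∈ C, G.Adj v c}

/-- A connectivity-sensitive star decomposition of `G`, given by its central bag and its
set of leaf bags. -/
structure ConnSensStar (G : SimpleGraph V) where
  center : Finset V
  leaves : Finset (Finset V)
  cover : ∀ v : V, v ∈ center ∨ ∃ L ∈ leaves, v ∈ L
  edges : ∀ x y : V, G.Adj x y →
    (x ∈ center ∧ y ∈ center) ∨ ∃ L ∈ leaves, x ∈ L ∧ y ∈ L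
  inter : ∀ L ∈ leaves, ∀ L' ∈ leaves, L ≠ L' → ∀ v ∈ L, v ∈ L' → v ∈ center
  adh_distinct : ∀ L ∈ leaves, ∀ L' ∈ leaves, L ∩ center = L' ∩ center → L = L'
  comp_nbhd : ∀ L ∈ leaves, ∀ C : Set V,
    IsCompWithin G ((↑L : Set V) \ (↑center : Set V)) C → nbhdSet G C = ↑(L ∩ center)

/-- `(A,B)` is an `S`-stable separation of `G`. -/
def IsStableSep (G : SimpleGraph V) (S : Finset V) (A B : Finset V) : Prop :=
  IsSep G A B ∧ ∃ SL SR : Finset V, SL ∪ SR = S ∧ SL ∩ SR = ∅ ∧ SL ⊆ A ∧ SR ⊆ B ∧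
    ∀ A' B' : Finset V, IsSep G A' B' → SL ⊆ A' → SR ⊆ B' → (A ∩ B).card ≤ (A' ∩ B').card

/-- A `Λ`-boundaried graph: a graph together with an injective partial assignment of
labels to (boundary) vertices. -/
structure BGraph (Λ : Type*) (V : Type*) where
  G : SimpleGraph V
  bd : Λ → Option V
  inj : ∀ l l' v, bd l = some v → bd l' = some v → l = l'

/-- `K` (with embeddings `f₁`, `f₂`) is the gluing `H₁ ⊕ H₂` of two boundaried graphs:
vertices of equal label are identified, and an edge is present iff it is present in
(at least) one of the two graphs. -/
def IsGluing {Λ V₁ V₂ W : Type*} (H₁ : BGraph Λ V₁) (H₂ : BGraph Λ V₂)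
    (K : SimpleGraph W) (f₁ : V₁ → W) (f₂ : V₂ → W) : Prop :=
  Function.Injective f₁ ∧ Function.Injective f₂ ∧
  (∀ w : W, (∃ a, f₁ a = w) ∨ (∃ b, f₂ b = w)) ∧
  (∀ a b, f₁ a = f₂ b ↔ ∃ l, H₁.bd l = some a ∧ H₂.bd l = some b) ∧
  (∀ x y : W, K.Adj x y ↔
    (∃ a b, f₁ a = x ∧ f₁ b = y ∧ H₁.G.Adj a b) ∨
    (∃ a b, f₂ a = x ∧ f₂ b = y ∧ H₂.G.Adj a b))

/-- The weak cut signature value of the boundaried graph `H` at `(A', B')` is at most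
`n − |A' ∩ B'|`: there is a separation of order at most `n` whose sides contain the
boundary vertices labeled by `A'` and `B'`, respectively. -/
def WeakSigLE {Λ : Type*} {V : Type*} [Fintype V] [DecidableEq V]
    (H : BGraph Λ V) (A' B' : Finset Λ) (n : ℕ) : Prop :=
  ∃ A B : Finset V, IsSep H.G A B ∧
    (∀ l ∈ A', ∀ v, H.bd l = some v → v ∈ A) ∧
    (∀ l ∈ B', ∀ v, H.bd l = some v → v ∈ B) ∧ (A ∩ B).card ≤ n

/-- Two `Λ`-boundaried graphs have the same weak cut signature. -/
def SameWeakSig {Λ : Type*} [Fintype Λ] [DecidableEq Λ] {V₁ V₂ : Type*}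
    [Fintype V₁] [DecidableEq V₁] [Fintype V₂] [DecidableEq V₂]
    (H₁ : BGraph Λ V₁) (H₂ : BGraph Λ V₂) : Prop :=
  ∀ A' B' : Finset Λ, A' ∪ B' = Finset.univ →
    ∀ n : ℕ, WeakSigLE H₁ A' B' n ↔ WeakSigLE H₂ A' B' n

/- If `(A, B)` has order `i` and the centre meets `A` in at most `c = q(i)` vertices, moving
`A ∩ χ(b)` to the right side gives a separation of order at most `c + i` containing every
adhesion on its right, so each leaf bag meets `A` in at most `q'(c + i)` vertices. Only few leaves
reach into `A` outside the centre: at most `i` of them have an interior vertex in `A ∩ B`, since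
interiors are disjoint; for any other one, connectivity sensitivity forces its whole adhesion into
`A ∩ χ(b)`, and distinct leaves have distinct adhesions, so there are at most `2^c` of those. -/

def IsUnbreakabilityTied (G : SimpleGraph V) (q' : ℕ → ℕ) (S D : Finset V) : Prop :=
  ∀ A B : Finset V, IsSep G A B → D ⊆ B → (A ∩ S).card ≤ q' (A ∩ B).card

namespace IsSep

variable {G : SimpleGraph V} {A B : Finset V}

theorem symm (h : IsSep G A B) : IsSep G B A :=
  ⟨by rw [union_comm, h.1], fun b hb hbA a ha haB hadj => h.2 a ha haB b hb hbA hadj.symm⟩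

theorem mem_left_of_notMem_right (h : IsSep G A B) {v : V} (hv : v ∉ B) : v ∈ A := by
  have : v ∈ A ∪ B := h.1 ▸ mem_univ v
  exact (mem_union.mp this).resolve_right hv

theorem mem_left_of_adj (h : IsSep G A B) {a b : V} (ha : a ∉ B) (hadj : G.Adj a b) :
    b ∈ A := by
  by_contra hb
  exact h.2 a (h.mem_left_of_notMem_right ha) ha b (h.symm.mem_left_of_notMem_right hb) hb hadj

theorem notMem_right_of_walk (h : IsSep G A B) {x y : V} (p : G.Walk x y)
    (hp : ∀ v ∈ p.support, v ∉ A ∩ B) (hx : x ∉ B) : y ∉ B := by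
  induction p with
  | nil => exact hx
  | cons hadj p ih =>
    refine ih (fun v hv => hp v (List.mem_cons_of_mem _ hv)) fun hzB => ?_
    exact hp _ (List.mem_cons_of_mem _ p.start_mem_support)
      (mem_inter.mpr ⟨h.mem_left_of_adj hx hadj, hzB⟩)

theorem union_right (h : IsSep G A B) {X : Finset V} (hX : X ⊆ A) : IsSep G A (B ∪ X) := by
  refine ⟨eq_univ_of_forall fun v => ?_, fun a ha haBX b hb hbA => ?_⟩
  · by_cases hv : v ∈ B
    · exact mem_union_right _ (mem_union_left _ hv)
    · exact mem_union_left _ (h.mem_left_of_notMem_right hv)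
  · rcases mem_union.mp hb with hbB | hbX
    · exact h.2 a ha (fun haB => haBX (mem_union_left _ haB)) b hbB hbA
    · exact absurd (hX hbX) hbA

end IsSep

namespace ConnSensStar

set_option linter.unusedSectionVars false

variable {G : SimpleGraph V} (T : ConnSensStar G)

def leavesMeeting (S : Finset V) : Finset (Finset V) :=
  T.leaves.filter fun L => ((L \ T.center) ∩ S).Nonempty

theorem card_leavesMeeting_le (S : Finset V) : (T.leavesMeeting S).card ≤ S.card := by
  have hdisj : (T.leavesMeeting S : Set (Finset V)).PairwiseDisjoint
      fun L => (L \ T.center) ∩ S := by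
    intro L hL L' hL' hne
    refine disjoint_left.mpr fun v hv hv' => (mem_sdiff.mp (mem_inter.mp hv).1).2 ?_
    exact T.inter L (mem_filter.mp hL).1 L' (mem_filter.mp hL').1 hne v
      (mem_sdiff.mp (mem_inter.mp hv).1).1 (mem_sdiff.mp (mem_inter.mp hv').1).1
  calc (T.leavesMeeting S).card
      ≤ ((T.leavesMeeting S).biUnion fun L => (L \ T.center) ∩ S).card :=
        card_le_card_biUnion hdisj fun L hL => (mem_filter.mp hL).2
    _ ≤ S.card := card_le_card (biUnion_subset.mpr fun _ _ => inter_subset_right)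

theorem card_filter_adhesion_subset_le (S : Finset V) :
    (T.leaves.filter fun L => L ∩ T.center ⊆ S).card ≤ 2 ^ S.card := by
  rw [← card_powerset]
  refine card_le_card_of_injOn (fun L => L ∩ T.center)
    (fun L hL => mem_powerset.mpr (mem_filter.mp hL).2) fun L hL L' hL' h => ?_
  exact T.adh_distinct L (mem_filter.mp hL).1 L' (mem_filter.mp hL').1 h

/-- The component of `x` in the interior of `L` stays in `A \ B`, and its neighbourhood is the
whole adhesion of `L`. -/
theorem adhesion_subset_left {A B : Finset V} (hsep : IsSep G A B) {L : Finset V}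
    (hL : L ∈ T.leaves) (hdisj : ∀ v ∈ L \ T.center, v ∉ A ∩ B) {x : V}
    (hx : x ∈ L \ T.center) (hxB : x ∉ B) : L ∩ T.center ⊆ A := by
  intro v hv
  have hcomp : IsCompWithin G ((↑L : Set V) \ ↑T.center)
      {y | ∃ p : G.Walk x y, ∀ u ∈ p.support, u ∈ (↑L : Set V) \ ↑T.center} :=
    ⟨x, by simpa using mem_sdiff.mp hx, rfl⟩
  have hvnbhd : v ∈ nbhdSet G _ := (T.comp_nbhd L hL _ hcomp).symm ▸ (mem_coe.mpr hv)
  obtain ⟨-, c, ⟨p, hp⟩, hadj⟩ := hvnbhd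
  have hcB : c ∉ B :=
    hsep.notMem_right_of_walk p (fun u hu => hdisj u (by simpa using hp u hu)) hxB
  exact hsep.mem_left_of_adj hcB hadj.symm

theorem leavesMeeting_subset {A B : Finset V} (hsep : IsSep G A B) :
    T.leavesMeeting A ⊆
      T.leavesMeeting (A ∩ B) ∪ T.leaves.filter fun L => L ∩ T.center ⊆ A ∩ T.center := by
  intro L hL
  obtain ⟨hLleaf, x, hx⟩ := mem_filter.mp hL
  by_cases hmeet : ((L \ T.center) ∩ (A ∩ B)).Nonempty
  · exact mem_union_left _ (mem_filter.mpr ⟨hLleaf, hmeet⟩)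
  · have hdisj : ∀ v ∈ L \ T.center, v ∉ A ∩ B := fun v hv hvAB =>
      hmeet ⟨v, mem_inter.mpr ⟨hv, hvAB⟩⟩
    obtain ⟨hxint, hxA⟩ := mem_inter.mp hx
    have hxB : x ∉ B := fun hxB => hdisj x hxint (mem_inter.mpr ⟨hxA, hxB⟩)
    refine mem_union_right _ (mem_filter.mpr ⟨hLleaf, fun v hv => ?_⟩)
    exact mem_inter.mpr
      ⟨T.adhesion_subset_left hsep hLleaf hdisj hxint hxB hv, (mem_inter.mp hv).2⟩

theorem card_le_card_inter_center_add_sum (S : Finset V) :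
    S.card ≤ (S ∩ T.center).card + ∑ L ∈ T.leavesMeeting S, (S ∩ L).card := by
  have hcover : S ⊆ (S ∩ T.center) ∪ (T.leavesMeeting S).biUnion fun L => S ∩ L := by
    intro v hv
    by_cases hvc : v ∈ T.center
    · exact mem_union_left _ (mem_inter.mpr ⟨hv, hvc⟩)
    · obtain ⟨L, hL, hvL⟩ := (T.cover v).resolve_left hvc
      have hmeet : ((L \ T.center) ∩ S).Nonempty :=
        ⟨v, mem_inter.mpr ⟨mem_sdiff.mpr ⟨hvL, hvc⟩, hv⟩⟩
      exact mem_union_right _ (mem_biUnion.mpr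
        ⟨L, mem_filter.mpr ⟨hL, hmeet⟩, mem_inter.mpr ⟨hv, hvL⟩⟩)
  calc S.card ≤ _ := card_le_card hcover
    _ ≤ _ := card_union_le _ _
    _ ≤ _ := Nat.add_le_add_left card_biUnion_le _

theorem card_inter_leaf_le {q' : ℕ → ℕ} (hq' : Monotone q')
    (hleaf : ∀ L ∈ T.leaves, IsUnbreakabilityTied G q' L (L ∩ T.center))
    {A B : Finset V} (hsep : IsSep G A B) {c : ℕ} (hc : (A ∩ T.center).card ≤ c)
    {L : Finset V} (hL : L ∈ T.leaves) :
    (A ∩ L).card ≤ q' (c + (A ∩ B).card) := by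
  have horder : (A ∩ (B ∪ A ∩ T.center)).card ≤ c + (A ∩ B).card :=
    calc (A ∩ (B ∪ A ∩ T.center)).card ≤ ((A ∩ B) ∪ (A ∩ T.center)).card :=
          card_le_card fun v => by simp only [mem_inter, mem_union]; tauto
      _ ≤ (A ∩ B).card + (A ∩ T.center).card := card_union_le _ _
      _ ≤ c + (A ∩ B).card := by omega
  have hadh : L ∩ T.center ⊆ B ∪ A ∩ T.center := fun v hv => by
    by_cases hvB : v ∈ B
    · exact mem_union_left _ hvB
    · exact mem_union_right _
        (mem_inter.mpr ⟨hsep.mem_left_of_notMem_right hvB, (mem_inter.mp hv).2⟩)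
  exact (hleaf L hL _ _ (hsep.union_right inter_subset_left) hadh).trans (hq' horder)

theorem card_le_of_card_inter_center_le {q' : ℕ → ℕ} (hq' : Monotone q')
    (hleaf : ∀ L ∈ T.leaves, IsUnbreakabilityTied G q' L (L ∩ T.center))
    {A B : Finset V} (hsep : IsSep G A B) {c : ℕ} (hc : (A ∩ T.center).card ≤ c) :
    A.card ≤ c + (2 ^ c + (A ∩ B).card) * q' (c + (A ∩ B).card) := by
  set i := (A ∩ B).card
  have hcount : (T.leavesMeeting A).card ≤ 2 ^ c + i :=
    calc (T.leavesMeeting A).card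
        ≤ (T.leavesMeeting (A ∩ B)).card +
            (T.leaves.filter fun L => L ∩ T.center ⊆ A ∩ T.center).card :=
          (card_le_card (T.leavesMeeting_subset hsep)).trans (card_union_le _ _)
      _ ≤ i + 2 ^ c := Nat.add_le_add (T.card_leavesMeeting_le _)
          ((T.card_filter_adhesion_subset_le _).trans (Nat.pow_le_pow_right two_pos hc))
      _ = 2 ^ c + i := add_comm _ _
  calc A.card ≤ (A ∩ T.center).card + ∑ L ∈ T.leavesMeeting A, (A ∩ L).card :=
        T.card_le_card_inter_center_add_sum A
    _ ≤ c + (T.leavesMeeting A).card * q' (c + i) := by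
        gcongr
        exact sum_le_card_nsmul _ _ _ fun L hL =>
          T.card_inter_leaf_le hq' hleaf hsep hc (mem_filter.mp hL).1
    _ ≤ c + (2 ^ c + i) * q' (c + i) := by gcongr

end ConnSensStar

theorem star_decomp_unbreakable_general (G : SimpleGraph V) (k : ℕ) (q q' : ℕ → ℕ)
    (hq' : Monotone q') (T : ConnSensStar G)
    (hcenter : ∀ A B : Finset V, IsSep G A B → (A ∩ B).card ≤ k →
      (A ∩ T.center).card ≤ q (A ∩ B).card ∨ (B ∩ T.center).card ≤ q (A ∩ B).card)
    (hleaf : ∀ L ∈ T.leaves, ∀ A B : Finset V, IsSep G A B → L ∩ T.center ⊆ B →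
      (A ∩ L).card ≤ q' (A ∩ B).card) :
    ∀ A B : Finset V, IsSep G A B → (A ∩ B).card ≤ k →
      A.card ≤ q (A ∩ B).card +
        (2 ^ q (A ∩ B).card + (A ∩ B).card) * q' (q (A ∩ B).card + (A ∩ B).card) ∨
      B.card ≤ q (A ∩ B).card +
        (2 ^ q (A ∩ B).card + (A ∩ B).card) * q' (q (A ∩ B).card + (A ∩ B).card) := by
  intro A B hsep horder
  rcases hcenter A B hsep horder with hA | hB
  · exact Or.inl (T.card_le_of_card_inter_center_le hq' hleaf hsep hA)
  · right
    rw [inter_comm A B] at hB ⊢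
    exact T.card_le_of_card_inter_center_le hq' hleaf hsep.symm hB

/-- if `G` has a connectivity-sensitive star decomposition whose central
bag is `q`-unbreakable and each leaf bag is `q'`-unbreakability-tied to its adhesion,
then `V(G)` is `q*`-unbreakable with `q*(i) = q(i) + (2^{q(i)} + i)·q'(q(i) + i)`. -/
theorem star_decomp_unbreakable (G : SimpleGraph V) (k : ℕ) (q q' : ℕ → ℕ)
    (hq : Monotone q) (hq' : Monotone q') (T : ConnSensStar G)
    (hcenter : ∀ A B : Finset V, IsSep G A B → (A ∩ B).card ≤ k →
      (A ∩ T.center).card ≤ q (A ∩ B).card ∨ (B ∩ T.center).card ≤ q (A ∩ B).card)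
    (hleaf : ∀ L ∈ T.leaves, ∀ A B : Finset V, IsSep G A B → L ∩ T.center ⊆ B →
      (A ∩ L).card ≤ q' (A ∩ B).card) :
    ∀ A B : Finset V, IsSep G A B → (A ∩ B).card ≤ k →
      A.card ≤ q (A ∩ B).card +
        (2 ^ q (A ∩ B).card + (A ∩ B).card) * q' (q (A ∩ B).card + (A ∩ B).card) ∨
      B.card ≤ q (A ∩ B).card +
        (2 ^ q (A ∩ B).card + (A ∩ B).card) * q' (q (A ∩ B).card + (A ∩ B).card) :=
  star_decomp_unbreakable_general G k q q' hq' T hcenter hleaf
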